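/- arXiv:1710.08122 — 3 statements merged into one kernel-verified Lean document; each statement's English description precedes it below -/
import Mathlib

section
/- If θ = ξ∂_x + η∂_y satisfies ∂_x(η - Fξ) + F∂_y(η - Fξ) = (∂_y F)(η - Fξ) and η - Fξ is nowhere zero, then χ = 1/(η - Fξ) satisfies ∂_x χ - ∂_y(ωχ) = 0 with ω = -F, i.e. χ is an integrating factor making the 1-form χ(dy + ω dx) closed. -/
/-! `χ = (η - Fξ)⁻¹` has `∂_x χ - ∂_y(-Fχ) = (F_y G - (G_x + F G_y)) / G²` with `G = η - Fξ`,
by the quotient and product rules; Lie's condition says exactly that this numerator vanishes. -/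

section IntegratingFactor

variable {𝕜 E : Type*} [NontriviallyNormedField 𝕜] [NormedAddCommGroup E] [NormedSpace 𝕜 E]
  {f g : E → 𝕜} {x : E}

theorem fderiv_fun_inv_apply (hg : DifferentiableAt 𝕜 g x) (hx : g x ≠ 0) (v : E) :
    fderiv 𝕜 (fun y => (g y)⁻¹) x v = -fderiv 𝕜 g x v / g x ^ 2 := by
  have h := (hasFDerivAt_inv hx).comp x hg.hasFDerivAt
  rw [Function.comp_def] at h
  rw [h.fderiv]
  simp [div_eq_mul_inv, mul_comm]

theorem fderiv_inv_sub_fderiv_neg_mul_inv (hf : DifferentiableAt 𝕜 f x)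
    (hg : DifferentiableAt 𝕜 g x) (hx : g x ≠ 0) (v w : E) :
    fderiv 𝕜 (fun y => (g y)⁻¹) x v - fderiv 𝕜 (fun y => -f y * (g y)⁻¹) x w
      = (fderiv 𝕜 f x w * g x - (fderiv 𝕜 g x v + f x * fderiv 𝕜 g x w)) / g x ^ 2 := by
  rw [fderiv_fun_mul hf.fun_neg (hg.fun_inv hx), fderiv_fun_neg]
  simp only [add_apply, smul_apply, neg_apply, smul_eq_mul, fderiv_fun_inv_apply hg hx]
  field_simp
  ring

end IntegratingFactor

/-- If `θ = ξ∂_x + η∂_y` satisfies Lie's condition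
`∂_x(η - Fξ) + F ∂_y(η - Fξ) = F_y (η - Fξ)` and `η - Fξ` is nowhere zero,
then `χ = 1/(η - Fξ)` is an integrating factor for `dy + ω dx` with `ω = -F`:
`∂_x χ - ∂_y(ωχ) = 0`. -/
theorem integrating_factor (F ξ η : ℝ × ℝ → ℝ)
    (hF : ContDiff ℝ 1 F) (hξ : ContDiff ℝ 1 ξ) (hη : ContDiff ℝ 1 η)
    (h0 : ∀ q, η q - F q * ξ q ≠ 0)
    (hlie : ∀ q, fderiv ℝ (fun p => η p - F p * ξ p) q (1, 0)
        + F q * fderiv ℝ (fun p => η p - F p * ξ p) q (0, 1)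
      = fderiv ℝ F q (0, 1) * (η q - F q * ξ q)) :
    ∀ q : ℝ × ℝ,
      fderiv ℝ (fun p => (η p - F p * ξ p)⁻¹) q (1, 0)
        - fderiv ℝ (fun p => (-(F p)) * (η p - F p * ξ p)⁻¹) q (0, 1) = 0 := by
  intro q
  have hFd : Differentiable ℝ F := hF.differentiable one_ne_zero
  have hGd : Differentiable ℝ (fun p => η p - F p * ξ p) :=
    (hη.differentiable one_ne_zero).sub (hFd.mul (hξ.differentiable one_ne_zero))
  rw [fderiv_inv_sub_fderiv_neg_mul_inv (hFd q) (hGd q) (h0 q), hlie q, sub_self, zero_div]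
end

section
/- Let φ(x,y,v) be a C² first integral of v' = F (i.e. φ_x + v φ_y + F(x,y) φ_v = 0) with φ_v ≠ 0, and let ψ(x,y;c) be defined implicitly by φ(x,y,ψ(x,y;c)) = c. Then ψ satisfies ψ_x + ψ ψ_y = F(x,y), and 1/φ_v(x,y,ψ(x,y;c)) is an integrating factor for dy - ψ dx: ∂_x(1/φ_v) + ∂_y(ψ/φ_v) = 0 along v = ψ(x,y;c). -/
/-!
Differentiating `φ (x, y, ψ (x, y, c)) = c` in `x` and `y` gives `φ_x = -ψ_x φ_v` and
`φ_y = -ψ_y φ_v` along the graph of `ψ`; substituting these into the PDE and dividing by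
`φ_v ≠ 0` gives `ψ_x + ψ ψ_y = F`. Differentiating the PDE in `v`, on which `F` does not
depend, gives `φ_{vx} + v φ_{vy} + φ_y + F φ_{vv} = 0`; by Schwarz and the two relations
above this is the divergence identity.
-/

open ContinuousLinearMap

theorem ContinuousLinearMap.apply_triple_eq_sum {M : Type*} [AddCommGroup M] [Module ℝ M]
    [TopologicalSpace M] (L : ℝ × ℝ × ℝ →L[ℝ] M) (a b w : ℝ) :
    L (a, b, w) = a • L (1, 0, 0) + b • L (0, 1, 0) + w • L (0, 0, 1) := by
  rw [← L.map_smul, ← L.map_smul, ← L.map_smul, ← L.map_add, ← L.map_add]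
  simp

theorem fderiv_fderiv_apply_comm {E F : Type*} [NormedAddCommGroup E] [NormedSpace ℝ E]
    [NormedAddCommGroup F] [NormedSpace ℝ F] {φ : E → F} {p : E} (hφ : ContDiffAt ℝ 2 φ p)
    (u w : E) :
    fderiv ℝ (fun q => fderiv ℝ φ q u) p w = fderiv ℝ (fun q => fderiv ℝ φ q w) p u := by
  have hφ' : DifferentiableAt ℝ (fderiv ℝ φ) p :=
    (hφ.fderiv_right (m := 1) le_rfl).differentiableAt one_ne_zero
  rw [fderiv_clm_apply hφ' (differentiableAt_const u),
    fderiv_clm_apply hφ' (differentiableAt_const w)]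
  simpa using hφ.isSymmSndFDerivAt (by simp) w u

theorem hasDerivAt_comp_vertical {G : ℝ × ℝ × ℝ → ℝ} {x y v : ℝ}
    (hG : DifferentiableAt ℝ G (x, y, v)) :
    HasDerivAt (fun t => G (x, y, t)) (fderiv ℝ G (x, y, v) (0, 0, 1)) v :=
  hG.hasFDerivAt.comp_hasDerivAt v
    ((hasDerivAt_const v x).prodMk ((hasDerivAt_const v y).prodMk (hasDerivAt_id v)))

section FirstIntegral

variable {φ : ℝ × ℝ × ℝ → ℝ}

theorem fderiv_apply_graph_of_level_set {ψ : ℝ × ℝ × ℝ → ℝ}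
    (himp : ∀ x y c : ℝ, φ (x, y, ψ (x, y, c)) = c) {q : ℝ × ℝ × ℝ}
    (hφ : DifferentiableAt ℝ φ (q.1, q.2.1, ψ q)) (hψ : DifferentiableAt ℝ ψ q)
    (u : ℝ × ℝ × ℝ) :
    fderiv ℝ φ (q.1, q.2.1, ψ q) (u.1, u.2.1, fderiv ℝ ψ q u) = u.2.2 := by
  have hgraph := (hasFDerivAt_fst (p := q)).prodMk (hasFDerivAt_snd.fst.prodMk hψ.hasFDerivAt)
  have hcomp := hφ.hasFDerivAt.comp q hgraph
  have hlevel : φ ∘ (fun q : ℝ × ℝ × ℝ => (q.1, q.2.1, ψ q)) = fun q => q.2.2 :=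
    funext fun q => himp q.1 q.2.1 q.2.2
  rw [hlevel] at hcomp
  simpa using DFunLike.congr_fun (hcomp.unique hasFDerivAt_snd.snd) u

theorem vertical_deriv_of_first_integral {k x y v : ℝ}
    (hφ : DifferentiableAt ℝ (fderiv ℝ φ) (x, y, v))
    (hpde : ∀ t : ℝ, fderiv ℝ φ (x, y, t) (1, 0, 0) + t * fderiv ℝ φ (x, y, t) (0, 1, 0)
      + k * fderiv ℝ φ (x, y, t) (0, 0, 1) = 0) :
    fderiv ℝ (fun q => fderiv ℝ φ q (1, 0, 0)) (x, y, v) (0, 0, 1)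
      + v * fderiv ℝ (fun q => fderiv ℝ φ q (0, 1, 0)) (x, y, v) (0, 0, 1)
      + fderiv ℝ φ (x, y, v) (0, 1, 0)
      + k * fderiv ℝ (fun q => fderiv ℝ φ q (0, 0, 1)) (x, y, v) (0, 0, 1) = 0 := by
  have hpartial (u : ℝ × ℝ × ℝ) :=
    hasDerivAt_comp_vertical (hφ.clm_apply (differentiableAt_const u))
  have hsum := ((hpartial (1, 0, 0)).add ((hasDerivAt_id v).mul (hpartial (0, 1, 0)))).add
    ((hpartial (0, 0, 1)).const_mul k)
  have hzero : HasDerivAt (fun t : ℝ => fderiv ℝ φ (x, y, t) (1, 0, 0)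
      + t * fderiv ℝ φ (x, y, t) (0, 1, 0) + k * fderiv ℝ φ (x, y, t) (0, 0, 1)) 0 v := by
    simpa only [hpde] using hasDerivAt_const v (0 : ℝ)
  have hderiv := hsum.unique hzero
  simp only [id_eq, one_mul] at hderiv
  linear_combination hderiv

end FirstIntegral

theorem first_integral_integrating_factor_general
    (F : ℝ × ℝ → ℝ) (φ ψ : ℝ × ℝ × ℝ → ℝ)
    (hφ : ContDiff ℝ 2 φ) (hψ : ContDiff ℝ 1 ψ)
    (hpde : ∀ q : ℝ × ℝ × ℝ,
      fderiv ℝ φ q (1, 0, 0) + q.2.2 * fderiv ℝ φ q (0, 1, 0)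
        + F (q.1, q.2.1) * fderiv ℝ φ q (0, 0, 1) = 0)
    (hφv : ∀ q, fderiv ℝ φ q (0, 0, 1) ≠ 0)
    (himp : ∀ x y c : ℝ, φ (x, y, ψ (x, y, c)) = c) :
    ∀ x y c : ℝ,
      (fderiv ℝ ψ (x, y, c) (1, 0, 0)
          + ψ (x, y, c) * fderiv ℝ ψ (x, y, c) (0, 1, 0) = F (x, y))
      ∧ (fderiv ℝ (fun q => fderiv ℝ φ q (0, 0, 1)) (x, y, ψ (x, y, c)) (1, 0, 0)
          + (fderiv ℝ ψ (x, y, c) (1, 0, 0)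
              + ψ (x, y, c) * fderiv ℝ ψ (x, y, c) (0, 1, 0))
            * fderiv ℝ (fun q => fderiv ℝ φ q (0, 0, 1)) (x, y, ψ (x, y, c)) (0, 0, 1)
          + ψ (x, y, c)
            * fderiv ℝ (fun q => fderiv ℝ φ q (0, 0, 1)) (x, y, ψ (x, y, c)) (0, 1, 0)
          - fderiv ℝ ψ (x, y, c) (0, 1, 0)
            * fderiv ℝ φ (x, y, ψ (x, y, c)) (0, 0, 1) = 0) := by
  intro x y c
  have hφp : DifferentiableAt ℝ φ (x, y, ψ (x, y, c)) := (hφ.differentiable two_ne_zero) _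
  have hψq : DifferentiableAt ℝ ψ (x, y, c) := (hψ.differentiable one_ne_zero) _
  have hx := fderiv_apply_graph_of_level_set himp hφp hψq (1, 0, 0)
  have hy := fderiv_apply_graph_of_level_set himp hφp hψq (0, 1, 0)
  rw [apply_triple_eq_sum] at hx hy
  simp only [smul_eq_mul] at hx hy
  have hcharacteristic : fderiv ℝ ψ (x, y, c) (1, 0, 0)
      + ψ (x, y, c) * fderiv ℝ ψ (x, y, c) (0, 1, 0) = F (x, y) :=
    mul_right_cancel₀ (hφv (x, y, ψ (x, y, c)))
      (by linear_combination hx + ψ (x, y, c) * hy - hpde (x, y, ψ (x, y, c)))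
  refine ⟨hcharacteristic, ?_⟩
  have hvert := vertical_deriv_of_first_integral (k := F (x, y)) (v := ψ (x, y, c))
    (((hφ.fderiv_right (m := 1) le_rfl).differentiable one_ne_zero) _) fun t => hpde (x, y, t)
  rw [fderiv_fderiv_apply_comm hφ.contDiffAt, fderiv_fderiv_apply_comm (u := (0, 1, 0))
    hφ.contDiffAt] at hvert
  rw [hcharacteristic]
  linear_combination hvert - hy

/-- Let `φ(x,y,v)` be a first integral of `v' = F`, i.e.
`φ_x + v φ_y + F φ_v = 0`, with `φ_v ≠ 0`, and let `ψ(x,y;c)` be defined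
implicitly by `φ(x,y,ψ(x,y;c)) = c`. Then `ψ_x + ψ ψ_y = F`, and `1/φ_v` is an
integrating factor for `dy - ψ dx`, i.e.
`φ_{xv} + (ψ_x + ψψ_y)φ_{vv} + ψ φ_{yv} - ψ_y φ_v = 0` along `v = ψ(x,y;c)`. -/
theorem first_integral_integrating_factor
    (F : ℝ × ℝ → ℝ) (φ ψ : ℝ × ℝ × ℝ → ℝ)
    (hF : ContDiff ℝ 1 F) (hφ : ContDiff ℝ 2 φ) (hψ : ContDiff ℝ 1 ψ)
    (hpde : ∀ q : ℝ × ℝ × ℝ,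
      fderiv ℝ φ q (1, 0, 0) + q.2.2 * fderiv ℝ φ q (0, 1, 0)
        + F (q.1, q.2.1) * fderiv ℝ φ q (0, 0, 1) = 0)
    (hφv : ∀ q, fderiv ℝ φ q (0, 0, 1) ≠ 0)
    (himp : ∀ x y c : ℝ, φ (x, y, ψ (x, y, c)) = c) :
    ∀ x y c : ℝ,
      (fderiv ℝ ψ (x, y, c) (1, 0, 0)
          + ψ (x, y, c) * fderiv ℝ ψ (x, y, c) (0, 1, 0) = F (x, y))
      ∧ (fderiv ℝ (fun q => fderiv ℝ φ q (0, 0, 1)) (x, y, ψ (x, y, c)) (1, 0, 0)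
          + (fderiv ℝ ψ (x, y, c) (1, 0, 0)
              + ψ (x, y, c) * fderiv ℝ ψ (x, y, c) (0, 1, 0))
            * fderiv ℝ (fun q => fderiv ℝ φ q (0, 0, 1)) (x, y, ψ (x, y, c)) (0, 0, 1)
          + ψ (x, y, c)
            * fderiv ℝ (fun q => fderiv ℝ φ q (0, 0, 1)) (x, y, ψ (x, y, c)) (0, 1, 0)
          - fderiv ℝ ψ (x, y, c) (0, 1, 0)
            * fderiv ℝ φ (x, y, ψ (x, y, c)) (0, 0, 1) = 0) :=
  first_integral_integrating_factor_general F φ ψ hφ hψ hpde hφv himp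
end

section
/- Consider the Pfaffian identity dz - p dx + H(t,x,z,p) dt = dZ - P dX on ℝ⁴ with coordinates (t,x,z,p), where Z, X, P are smooth functions of (t,x,z,p). Taking exterior derivative and wedging, the 4-form obtained from the closure conditions equals 2(∂H/∂z) dt∧dx∧dz∧dp; hence compatibility of the system forces ∂H/∂z = 0. -/
/-!
Applying the exterior derivative to both sides of the identity and using `d² = 0` for the `C²`
functions `Z` and `X` gives `dx ∧ dp + dH ∧ dt = dX ∧ dP` at every point. The right-hand side is
decomposable, so its wedge square vanishes, whereas the wedge square of the left-hand side is
`2 dx ∧ dp ∧ dH ∧ dt = 2 H_z dt ∧ dx ∧ dz ∧ dp`.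
-/

open ContinuousLinearMap

section OneForms

variable {E : Type*} [NormedAddCommGroup E] [NormedSpace ℝ E]

noncomputable def extDerivOneForm (α : E → E →L[ℝ] ℝ) (q : E) (v w : E) : ℝ :=
  fderiv ℝ α q v w - fderiv ℝ α q w v

def wedge (a b : E →L[ℝ] ℝ) (v w : E) : ℝ :=
  a v * b w - a w * b v

/-- `(ω ∧ ω)(u, v, w, x)` for an alternating bilinear form `ω`. -/
def wedgeSelf (ω : E → E → ℝ) (u v w x : E) : ℝ :=
  2 * (ω u v * ω w x - ω u w * ω v x + ω u x * ω v w)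

theorem wedge_anticomm (a b : E →L[ℝ] ℝ) : wedge a b = -wedge b a := by
  funext v w
  simp only [wedge, Pi.neg_apply]
  ring

theorem wedgeSelf_wedge (a b : E →L[ℝ] ℝ) (u v w x : E) :
    wedgeSelf (wedge a b) u v w x = 0 := by
  simp only [wedgeSelf, wedge]
  ring

variable {α β : E → E →L[ℝ] ℝ} {q : E}

theorem extDerivOneForm_const (a : E →L[ℝ] ℝ) : extDerivOneForm (fun _ => a) q = 0 := by
  funext v w
  simp [extDerivOneForm]

theorem extDerivOneForm_fderiv {f : E → ℝ} (hf : ContDiffAt ℝ 2 f q) :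
    extDerivOneForm (fderiv ℝ f) q = 0 := by
  funext v w
  simp [extDerivOneForm, hf.isSymmSndFDerivAt (by simp) v w]

theorem extDerivOneForm_add (hα : DifferentiableAt ℝ α q) (hβ : DifferentiableAt ℝ β q) :
    extDerivOneForm (fun y => α y + β y) q = extDerivOneForm α q + extDerivOneForm β q := by
  funext v w
  simp only [extDerivOneForm, fderiv_fun_add hα hβ, add_apply, Pi.add_apply]
  ring

theorem extDerivOneForm_sub (hα : DifferentiableAt ℝ α q) (hβ : DifferentiableAt ℝ β q) :
    extDerivOneForm (fun y => α y - β y) q = extDerivOneForm α q - extDerivOneForm β q := by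
  funext v w
  simp only [extDerivOneForm, fderiv_fun_sub hα hβ, sub_apply, Pi.sub_apply]
  ring

theorem extDerivOneForm_smul {g : E → ℝ} (hg : DifferentiableAt ℝ g q)
    (hα : DifferentiableAt ℝ α q) :
    extDerivOneForm (fun y => g y • α y) q
      = wedge (fderiv ℝ g q) (α q) + g q • extDerivOneForm α q := by
  funext v w
  simp only [extDerivOneForm, wedge, fderiv_fun_smul hg hα, add_apply, smul_apply,
    smulRight_apply, smul_eq_mul, Pi.add_apply, Pi.smul_apply]
  ring

theorem extDerivOneForm_smul_const {g : E → ℝ} (hg : DifferentiableAt ℝ g q) (a : E →L[ℝ] ℝ) :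
    extDerivOneForm (fun y => g y • a) q = wedge (fderiv ℝ g q) a := by
  rw [extDerivOneForm_smul hg (differentiableAt_const a), extDerivOneForm_const, smul_zero,
    add_zero]

theorem extDerivOneForm_fderiv_sub_smul_fderiv {Z X P : E → ℝ} (hZ : ContDiffAt ℝ 2 Z q)
    (hX : ContDiffAt ℝ 2 X q) (hP : DifferentiableAt ℝ P q) :
    extDerivOneForm (fun y => fderiv ℝ Z y - P y • fderiv ℝ X y) q
      = wedge (fderiv ℝ X q) (fderiv ℝ P q) := by
  have hdZ := (hZ.fderiv_right (m := 1) (by norm_num)).differentiableAt one_ne_zero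
  have hdX := (hX.fderiv_right (m := 1) (by norm_num)).differentiableAt one_ne_zero
  rw [extDerivOneForm_sub (β := fun y => P y • fderiv ℝ X y) hdZ (hP.smul hdX),
    extDerivOneForm_smul hP hdX, extDerivOneForm_fderiv hZ, extDerivOneForm_fderiv hX,
    wedge_anticomm]
  simp

end OneForms

namespace Pfaffian

def dt : ℝ × ℝ × ℝ × ℝ →L[ℝ] ℝ := fst ℝ ℝ _
def dx : ℝ × ℝ × ℝ × ℝ →L[ℝ] ℝ := (fst ℝ ℝ _).comp (snd ℝ ℝ _)
def dz : ℝ × ℝ × ℝ × ℝ →L[ℝ] ℝ := (fst ℝ ℝ _).comp ((snd ℝ ℝ _).comp (snd ℝ ℝ _))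
def dp : ℝ × ℝ × ℝ × ℝ →L[ℝ] ℝ := (snd ℝ ℝ _).comp ((snd ℝ ℝ _).comp (snd ℝ ℝ _))

noncomputable def pfaffForm (H : ℝ × ℝ × ℝ × ℝ → ℝ) : ℝ × ℝ × ℝ × ℝ → ℝ × ℝ × ℝ × ℝ →L[ℝ] ℝ :=
  fun y => dz - dp y • dx + H y • dt

theorem extDerivOneForm_pfaffForm {H : ℝ × ℝ × ℝ × ℝ → ℝ} {q : ℝ × ℝ × ℝ × ℝ}
    (hH : DifferentiableAt ℝ H q) :
    extDerivOneForm (pfaffForm H) q = wedge dx dp + wedge (fderiv ℝ H q) dt := by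
  have hp : DifferentiableAt ℝ (fun y => dp y • dx) q := dp.differentiableAt.smul_const dx
  unfold pfaffForm
  rw [extDerivOneForm_add (α := fun y => dz - dp y • dx) (β := fun y => H y • dt)
    ((differentiableAt_const dz).sub hp) (hH.smul_const dt),
    extDerivOneForm_sub (differentiableAt_const dz) hp,
    extDerivOneForm_const, extDerivOneForm_smul_const dp.differentiableAt,
    extDerivOneForm_smul_const hH, dp.fderiv, wedge_anticomm dp]
  simp

theorem wedgeSelf_wedge_dx_dp_add_wedge_dt (h : ℝ × ℝ × ℝ × ℝ →L[ℝ] ℝ) :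
    wedgeSelf (wedge dx dp + wedge h dt) (1, 0, 0, 0) (0, 1, 0, 0) (0, 0, 1, 0) (0, 0, 0, 1)
      = 2 * h (0, 0, 1, 0) := by
  simp [wedgeSelf, wedge, dt, dx, dp]

end Pfaffian

open Pfaffian in
/-- If smooth functions `Z, X, P` of `(t,x,z,p)` satisfy the Pfaffian identity
`dz - p dx + H dt = dZ - P dX` (as an identity of 1-forms, i.e. evaluated on
every tangent vector `v`), then compatibility forces `∂H/∂z = 0`. -/
theorem pfaffian_forces_H_z_zero (H Z X P : ℝ × ℝ × ℝ × ℝ → ℝ)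
    (hH : ContDiff ℝ 2 H) (hZ : ContDiff ℝ 2 Z)
    (hX : ContDiff ℝ 2 X) (hP : ContDiff ℝ 2 P)
    (hpfaff : ∀ (q v : ℝ × ℝ × ℝ × ℝ),
      v.2.2.1 - q.2.2.2 * v.2.1 + H q * v.1
        = fderiv ℝ Z q v - P q * fderiv ℝ X q v) :
    ∀ q : ℝ × ℝ × ℝ × ℝ, fderiv ℝ H q (0, 0, 1, 0) = 0 := by
  intro q
  have hform : pfaffForm H = fun y => fderiv ℝ Z y - P y • fderiv ℝ X y :=
    funext fun y => ContinuousLinearMap.ext fun v => hpfaff y v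
  have hd := extDerivOneForm_pfaffForm (hH.differentiable (by norm_num) q)
  rw [hform, extDerivOneForm_fderiv_sub_smul_fderiv hZ.contDiffAt hX.contDiffAt
    (hP.differentiable (by norm_num) q)] at hd
  have hsq := wedgeSelf_wedge (fderiv ℝ X q) (fderiv ℝ P q) (1, 0, 0, 0) (0, 1, 0, 0) (0, 0, 1, 0)
    (0, 0, 0, 1)
  rw [hd, wedgeSelf_wedge_dx_dp_add_wedge_dt] at hsq
  simpa using hsq
end
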